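/- arXiv:0902.1332 — 2 statements merged into one kernel-verified Lean document; each statement's English description precedes it below -/
import Mathlib

section
/- Let B be a spherical building and let A ⊆ B be an apartment. If every panel a ∈ A is contained in at least three distinct chambers of B, then B is thick. -/
/-!
Buildings in their `W`-metric (chamber system) formulation: a building of type `(W, I)`
is a set `C` of chambers with a Weyl-group–valued distance function `δ : C → C → W`.
-/

section Buildings

variable {I W : Type*} [Group W]

/-- The `W`-metric axioms for a building of type `(W, I)` with chamber set `C` and
Weyl distance `δ`. -/
structure IsBuilding {C : Type*} (M : CoxeterMatrix I) (cs : CoxeterSystem M W)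
    (δ : C → C → W) : Prop where
  eq_one_iff : ∀ c d : C, δ c d = 1 ↔ c = d
  symm : ∀ c d : C, δ d c = (δ c d)⁻¹
  wd2 : ∀ (c d d' : C) (i : I), δ d d' = cs.simple i →
    δ c d' = δ c d * cs.simple i ∨ δ c d' = δ c d
  wd2' : ∀ (c d d' : C) (i : I), δ d d' = cs.simple i →
    cs.length (δ c d * cs.simple i) = cs.length (δ c d) + 1 →
    δ c d' = δ c d * cs.simple i
  wd3 : ∀ (c d : C) (i : I), ∃ d' : C, δ d d' = cs.simple i ∧ δ c d' = δ c d * cs.simple i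

variable {C : Type*} {M : CoxeterMatrix I} (cs : CoxeterSystem M W) (δ : C → C → W)

/-- The set of chambers containing the `i`-panel of the chamber `c`
(the residue of that panel). -/
def panelRes (i : I) (c : C) : Set C :=
  {d : C | δ c d = 1 ∨ δ c d = cs.simple i}

/-- The building is thick: every panel is contained in at least three chambers. -/
def IsThickBuilding : Prop :=
  ∀ (i : I) (c : C), ∃ d₁ d₂ d₃ : C, d₁ ≠ d₂ ∧ d₁ ≠ d₃ ∧ d₂ ≠ d₃ ∧
    d₁ ∈ panelRes cs δ i c ∧ d₂ ∈ panelRes cs δ i c ∧ d₃ ∈ panelRes cs δ i c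

/-- An apartment: a set of chambers on which `δ` restricts to the `W`-metric of the
Coxeter complex of `W`. -/
def IsBuildingApartment (A : Set C) : Prop :=
  ∃ α : W → C, (∀ w w' : W, δ (α w) (α w') = w⁻¹ * w') ∧ A = Set.range α

/-- The residue of the simplex of cotype `J` of the chamber `c`: all chambers containing
that simplex. -/
def simplexRes (J : Set I) (c : C) : Set C :=
  {d : C | δ c d ∈ Subgroup.closure (cs.simple '' J)}

end Buildings

/-!
Let `w₀` be a longest element of the finite Weyl group. Every chamber `c` has an opposite chamber
`a` in the apartment, `δ a c = w₀`, and if `s j * w₀ = w₀ * s i` then the `j`-panel of `a` is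
opposite the `i`-panel of `c`: assigning to each chamber `d` of the former a chamber `e` of the
latter with `δ d e = w₀ * s i` is injective, so the three chambers on the `j`-panel of `a` give
three chambers on the `i`-panel of `c`.

The facts about `w₀` used here, `ℓ (w₀ * x) + ℓ x = ℓ w₀` and `w₀ * s i * w₀⁻¹ = s j`, follow by
counting right inversions, whose number is the length once one knows that the right inversions of
`w` are exactly the entries of the right inversion sequence of any reduced word for `w`. That is
proved with Tits' reflection cocycle: `s i` acts on `W × ZMod 2` by
`(t, ε) ↦ (s i * t * s i, ε + [t = s i])`; these involutions satisfy the Coxeter relations, and the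
second coordinate of `w • (t, 0)` is the number of occurrences of `t`, mod 2, in the right inversion
sequence of every word for `w`.
-/

theorem ZMod.eq_zero_or_eq_one (a : ZMod 2) : a = 0 ∨ a = 1 := by
  revert a
  decide

namespace CoxeterSystem

open List

variable {B W : Type*} [Group W] {M : CoxeterMatrix B} (cs : CoxeterSystem M W)

local prefix:100 "s" => cs.simple
local prefix:100 "π" => cs.wordProd
local prefix:100 "ℓ" => cs.length
local prefix:100 "ris" => cs.rightInvSeq
local prefix:100 "lis" => cs.leftInvSeq

section ReflectionCocycle

open scoped Classical

theorem reverse_alternatingWord_two_mul (i j : B) (n : ℕ) :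
    (alternatingWord i j (2 * n)).reverse = alternatingWord j i (2 * n) := by
  induction n with
  | zero => rfl
  | succ n ih =>
    have hcons : alternatingWord i j (2 * (n + 1)) = i :: j :: alternatingWord i j (2 * n) := by
      rw [show 2 * (n + 1) = 2 * n + 1 + 1 by ring, alternatingWord_succ', alternatingWord_succ']
      simp
    rw [hcons, show 2 * (n + 1) = 2 * n + 1 + 1 by ring, alternatingWord_succ,
      alternatingWord_succ]
    simp [ih]

theorem even_count_rightInvSeq_alternatingWord (i j : B) (t : W) :
    Even ((ris (alternatingWord i j (2 * M i j))).count t) := by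
  set m := M i j
  set f : ℕ → W := fun k => s j * (s i * s j) ^ k
  have hf : ∀ k, f (m + k) = f k := fun k => by
    simp only [f, pow_add, m, cs.simple_mul_simple_pow, one_mul]
  have hlis : lis (alternatingWord j i (2 * m)) = (range (2 * m)).map f := by
    refine ext_getElem (by simp) fun k hk _ => ?_
    rw [cs.getElem_leftInvSeq_alternatingWord j i m k (by simpa using hk),
      prod_alternatingWord_eq_mul_pow]
    simp [f, Nat.mul_add_div]
  rw [← reverse_alternatingWord_two_mul, rightInvSeq_reverse, count_reverse, hlis, two_mul,
    range_add, map_append, map_map]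
  simp only [Function.comp_def, hf, count_append]
  exact ⟨_, rfl⟩

noncomputable def reflStep (i : B) : Function.End (W × ZMod 2) :=
  fun p => (s i * p.1 * s i, p.2 + if p.1 = s i then 1 else 0)

theorem reflStep_apply (i : B) (t : W) (ε : ZMod 2) :
    cs.reflStep i (t, ε) = (s i * t * s i, ε + if t = s i then 1 else 0) := rfl

theorem prod_map_reflStep_apply (ω : List B) (t : W) (ε : ZMod 2) :
    (ω.map cs.reflStep).prod (t, ε) = (π ω * t * (π ω)⁻¹, ε + (ris ω).count t) := by
  induction ω with
  | nil => simp [Function.End.one_def]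
  | cons i ω ih =>
    have hmem : (π ω)⁻¹ * s i * π ω = t ↔ π ω * t * (π ω)⁻¹ = s i := by
      constructor <;> intro h <;> rw [← h] <;> group
    change cs.reflStep i ((ω.map cs.reflStep).prod (t, ε)) = _
    rw [ih, reflStep_apply]
    simp only [wordProd_cons, rightInvSeq, count_cons, beq_iff_eq, hmem, mul_inv_rev, inv_simple]
    refine Prod.ext (by simp only [mul_assoc]) ?_
    split_ifs <;> push_cast <;> ring

theorem prod_map_reflStep_alternatingWord (i j : B) (n : ℕ) :
    ((alternatingWord i j (2 * n)).map cs.reflStep).prod = (cs.reflStep i * cs.reflStep j) ^ n := by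
  induction n with
  | zero => rfl
  | succ n ih =>
    rw [show 2 * (n + 1) = 2 * n + 1 + 1 by ring, alternatingWord_succ', alternatingWord_succ']
    simp [ih, pow_succ', mul_assoc]

theorem isLiftable_reflStep : M.IsLiftable cs.reflStep := by
  intro i j
  rw [← prod_map_reflStep_alternatingWord]
  funext ⟨t, ε⟩
  obtain ⟨c, hc⟩ := cs.even_count_rightInvSeq_alternatingWord i j t
  rw [prod_map_reflStep_apply, prod_alternatingWord_eq_mul_pow, hc]
  simp [cs.simple_mul_simple_pow, Function.End.one_def, CharTwo.add_self_eq_zero]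

noncomputable def reflCocycle : W →* Function.End (W × ZMod 2) :=
  cs.lift ⟨cs.reflStep, cs.isLiftable_reflStep⟩

theorem reflCocycle_wordProd (ω : List B) : cs.reflCocycle (π ω) = (ω.map cs.reflStep).prod := by
  rw [wordProd, map_list_prod, map_map]
  congr 2
  funext i
  exact cs.lift_apply_simple cs.isLiftable_reflStep i

noncomputable def inversionParity (w t : W) : ZMod 2 := (cs.reflCocycle w (t, 0)).2

theorem inversionParity_wordProd (ω : List B) (t : W) :
    cs.inversionParity (π ω) t = (ris ω).count t := by
  simp [inversionParity, reflCocycle_wordProd, prod_map_reflStep_apply]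

theorem reflCocycle_apply (w t : W) (ε : ZMod 2) :
    cs.reflCocycle w (t, ε) = (w * t * w⁻¹, ε + cs.inversionParity w t) := by
  obtain ⟨ω, rfl⟩ := cs.wordProd_surjective w
  rw [inversionParity_wordProd, reflCocycle_wordProd, prod_map_reflStep_apply]

theorem inversionParity_mul (u v t : W) :
    cs.inversionParity (u * v) t = cs.inversionParity v t + cs.inversionParity u (v * t * v⁻¹) := by
  change (cs.reflCocycle (u * v) (t, 0)).2 = _
  rw [map_mul]
  change (cs.reflCocycle u (cs.reflCocycle v (t, 0))).2 = _
  rw [reflCocycle_apply, reflCocycle_apply, zero_add]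

theorem inversionParity_one (t : W) : cs.inversionParity 1 t = 0 := by
  simpa using cs.inversionParity_wordProd [] t

theorem inversionParity_simple_self (i : B) : cs.inversionParity (s i) (s i) = 1 := by
  simpa using cs.inversionParity_wordProd [i] (s i)

theorem inversionParity_self {t : W} (ht : cs.IsReflection t) : cs.inversionParity t t = 1 := by
  obtain ⟨v, i, rfl⟩ := ht
  have hconj : v⁻¹ * (v * s i * v⁻¹) * v⁻¹⁻¹ = s i := by group
  have h1 := cs.inversionParity_mul v v⁻¹ (v * s i * v⁻¹)
  have h2 := cs.inversionParity_mul (v * s i) v⁻¹ (v * s i * v⁻¹)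
  have h3 := cs.inversionParity_mul v (s i) (s i)
  rw [mul_inv_cancel, inversionParity_one, hconj] at h1
  rw [hconj, h3, inversionParity_simple_self, cs.simple_mul_simple_self, one_mul,
    cs.inv_simple] at h2
  rw [h2]
  linear_combination -h1

theorem inversionParity_eq_one_iff_mem {ω : List B} (hω : cs.IsReduced ω) (t : W) :
    cs.inversionParity (π ω) t = 1 ↔ t ∈ ris ω := by
  rw [inversionParity_wordProd]
  by_cases ht : t ∈ ris ω
  · simp [ht, count_eq_one_of_mem hω.nodup_rightInvSeq ht]
  · simp [ht, count_eq_zero.mpr ht]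

theorem isRightInversion_of_inversionParity_eq_one {w t : W}
    (h : cs.inversionParity w t = 1) : cs.IsRightInversion w t := by
  obtain ⟨ω, hω, rfl⟩ := cs.exists_isReduced w
  exact cs.isRightInversion_of_mem_rightInvSeq hω ((cs.inversionParity_eq_one_iff_mem hω t).mp h)

theorem isRightInversion_iff_inversionParity_eq_one (w t : W) :
    cs.IsRightInversion w t ↔ cs.inversionParity w t = 1 := by
  refine ⟨fun ⟨ht, hlt⟩ => ?_, cs.isRightInversion_of_inversionParity_eq_one⟩
  by_contra hne
  have hzero := (ZMod.eq_zero_or_eq_one (cs.inversionParity w t)).resolve_right hne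
  have hwt : cs.inversionParity (w * t) t = 1 := by
    rw [inversionParity_mul, cs.inversionParity_self ht, ht.mul_self, one_mul, ht.inv, hzero,
      add_zero]
  have := (cs.isRightInversion_of_inversionParity_eq_one hwt).2
  rw [mul_assoc, ht.mul_self, mul_one] at this
  exact hlt.asymm this

theorem isRightInversion_iff_mem_rightInvSeq {ω : List B} (hω : cs.IsReduced ω) (t : W) :
    cs.IsRightInversion (π ω) t ↔ t ∈ ris ω := by
  rw [isRightInversion_iff_inversionParity_eq_one, inversionParity_eq_one_iff_mem cs hω]

theorem length_eq_ncard_isRightInversion (w : W) : ℓ w = {t | cs.IsRightInversion w t}.ncard := by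
  obtain ⟨ω, hω, rfl⟩ := cs.exists_isReduced w
  simp_rw [isRightInversion_iff_mem_rightInvSeq cs hω]
  rw [← coe_toFinset, Set.ncard_coe_finset, toFinset_card_of_nodup hω.nodup_rightInvSeq,
    length_rightInvSeq, hω.eq]

end ReflectionCocycle

section LongestElement

variable {w₀ : W}

theorem isRightInversion_of_forall_length_le (hmax : ∀ w, ℓ w ≤ ℓ w₀) {t : W}
    (ht : cs.IsReflection t) : cs.IsRightInversion w₀ t :=
  ⟨ht, (hmax _).lt_of_ne (ht.length_mul_left_ne w₀)⟩

theorem length_mul_add_length_of_forall_length_le [Finite W] (hmax : ∀ w, ℓ w ≤ ℓ w₀) (x : W) :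
    ℓ (w₀ * x) + ℓ x = ℓ w₀ := by
  have hinv : ∀ t, cs.IsRightInversion (w₀ * x) t ↔
      cs.IsReflection t ∧ ¬cs.IsRightInversion x t := fun t => by
    by_cases ht : cs.IsReflection t
    · have hw₀ := cs.isRightInversion_of_forall_length_le hmax (ht.conj x)
      rw [isRightInversion_iff_inversionParity_eq_one] at hw₀
      rw [isRightInversion_iff_inversionParity_eq_one, isRightInversion_iff_inversionParity_eq_one,
        inversionParity_mul, hw₀]
      rcases ZMod.eq_zero_or_eq_one (cs.inversionParity x t) with h | h <;> simp [h, ht]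
    · simp [IsRightInversion, ht]
  have hT : {t | cs.IsRightInversion w₀ t} = {t | cs.IsReflection t} :=
    Set.ext fun t => ⟨And.left, cs.isRightInversion_of_forall_length_le hmax⟩
  have hsub : {t | cs.IsRightInversion x t} ⊆ {t | cs.IsReflection t} := fun t => And.left
  rw [length_eq_ncard_isRightInversion, length_eq_ncard_isRightInversion,
    length_eq_ncard_isRightInversion cs w₀, hT, ← Set.ncard_sdiff_add_ncard_of_subset hsub]
  congr 2
  exact Set.ext hinv

theorem isRightDescent_of_forall_length_le (hmax : ∀ w, ℓ w ≤ ℓ w₀) (i : B) :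
    cs.IsRightDescent w₀ i :=
  (hmax _).lt_of_ne (cs.length_mul_simple_ne w₀ i)

theorem exists_simple_mul_eq_mul_simple_of_forall_length_le [Finite W] (hmax : ∀ w, ℓ w ≤ ℓ w₀)
    (i : B) : ∃ j, s j * w₀ = w₀ * s i := by
  have h := cs.length_mul_add_length_of_forall_length_le hmax (s i * w₀⁻¹)
  have hi := cs.isRightDescent_iff.mp (cs.isRightDescent_of_forall_length_le hmax i)
  rw [← cs.length_inv (s i * w₀⁻¹), mul_inv_rev, inv_inv, inv_simple] at h
  obtain ⟨j, hj⟩ := cs.length_eq_one_iff.mp (by omega : ℓ (w₀ * (s i * w₀⁻¹)) = 1)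
  exact ⟨j, by rw [← hj]; group⟩

end LongestElement
end CoxeterSystem

namespace IsBuilding

variable {I W C : Type*} [Group W] {M : CoxeterMatrix I} {cs : CoxeterSystem M W}
  {δ : C → C → W}

theorem delta_eq_mul_of_length_mul (hbld : IsBuilding M cs δ) {x y z : C}
    (hlen : cs.length (δ x y * δ y z) = cs.length (δ x y) + cs.length (δ y z)) :
    δ x z = δ x y * δ y z := by
  generalize hn : cs.length (δ y z) = n at hlen
  induction n generalizing z with
  | zero =>
    rw [cs.length_eq_zero_iff, hbld.eq_one_iff] at hn
    rw [hn, (hbld.eq_one_iff z z).mpr rfl, mul_one]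
  | succ n ih =>
    have hne : δ y z ≠ 1 := fun h => by simp [h] at hn
    obtain ⟨i, hi⟩ := cs.exists_rightDescent_of_ne_one hne
    obtain ⟨z', hzz', hyz'⟩ := hbld.wd3 y z i
    have hdesc := cs.isRightDescent_iff.mp hi
    have hcancel : δ x y * δ y z' * cs.simple i = δ x y * δ y z := by
      rw [hyz', mul_assoc, cs.simple_mul_simple_cancel_right]
    have hle := cs.length_mul_le (δ x y) (δ y z')
    have hle' := cs.length_mul_le (δ x y * δ y z') (cs.simple i)
    rw [hcancel, cs.length_simple] at hle'
    rw [← hyz'] at hdesc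
    have hxz' : δ x z' = δ x y * δ y z' := ih (by omega) (by omega)
    have hz'z : δ z' z = cs.simple i := by rw [hbld.symm, hzz', cs.inv_simple]
    rw [hbld.wd2' x z' z i hz'z (by rw [hxz', hcancel]; omega), hxz', hcancel]

theorem delta_mem_of_mem_panelRes (hbld : IsBuilding M cs δ) (c : C) {j : I} {a d : C}
    (hd : d ∈ panelRes cs δ j a) : δ c d = δ c a ∨ δ c d = δ c a * cs.simple j := by
  rcases hd with hd | hd
  · rw [(hbld.eq_one_iff a d).mp hd]
    exact Or.inl rfl
  · exact (hbld.wd2 c a d j hd).symm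

theorem delta_eq_simple_of_mem_panelRes (hbld : IsBuilding M cs δ) {i : I} {c d e : C}
    (hd : d ∈ panelRes cs δ i c) (he : e ∈ panelRes cs δ i c) (hde : d ≠ e) :
    δ d e = cs.simple i := by
  have hdc : δ d c = 1 ∨ δ d c = cs.simple i := by
    rw [hbld.symm c d, inv_eq_one, inv_eq_iff_eq_inv, cs.inv_simple]
    exact hd
  have hne : δ d e ≠ 1 := fun h => hde ((hbld.eq_one_iff d e).mp h)
  rcases hbld.delta_mem_of_mem_panelRes d he with h | h <;> rcases hdc with h' | h'
  · exact absurd (h.trans h') hne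
  · exact h.trans h'
  · rw [h, h', one_mul]
  · exact absurd (by rw [h, h', cs.simple_mul_simple_self]) hne

theorem exists_mem_delta_eq_of_isBuildingApartment [Finite W] (hbld : IsBuilding M cs δ)
    {A : Set C} (hA : IsBuildingApartment δ A) {w₀ : W} (hmax : ∀ w, cs.length w ≤ cs.length w₀)
    (c : C) : ∃ a ∈ A, δ a c = w₀ := by
  obtain ⟨α, hα, rfl⟩ := hA
  set w := δ (α 1) c with hw
  have hu : δ (α (w * w₀⁻¹)) (α 1) = w₀ * w⁻¹ := by rw [hα]; group
  have hlen := cs.length_mul_add_length_of_forall_length_le hmax w⁻¹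
  rw [cs.length_inv] at hlen
  refine ⟨α (w * w₀⁻¹), ⟨_, rfl⟩, ?_⟩
  rw [hbld.delta_eq_mul_of_length_mul (y := α 1) (by rw [hu, ← hw, inv_mul_cancel_right]; omega),
    hu, ← hw, inv_mul_cancel_right]

theorem exists_mem_panelRes_delta_eq (hbld : IsBuilding M cs δ) {i j : I} {a c d : C} {w₀ : W}
    (hac : δ a c = w₀) (hj : cs.simple j * w₀ = w₀ * cs.simple i) (hd : d ∈ panelRes cs δ j a) :
    ∃ e ∈ panelRes cs δ i c, δ d e = w₀ * cs.simple i := by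
  have hca : δ c a = w₀⁻¹ := by rw [hbld.symm, hac]
  rcases hbld.delta_mem_of_mem_panelRes c hd with hcd | hcd
  · obtain ⟨e, hce, hde⟩ := hbld.wd3 d c i
    refine ⟨e, Or.inr hce, ?_⟩
    rw [hde, hbld.symm c d, hcd, hca, inv_inv]
  · refine ⟨c, Or.inl ((hbld.eq_one_iff c c).mpr rfl), ?_⟩
    rw [hbld.symm, hcd, hca, mul_inv_rev, inv_inv, cs.inv_simple, hj]

theorem eq_of_delta_eq_mul_simple (hbld : IsBuilding M cs δ) {i j : I} {a d d' e : C} {w₀ : W}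
    (hi : cs.IsRightDescent w₀ i) (hj : cs.simple j * w₀ = w₀ * cs.simple i)
    (hd : d ∈ panelRes cs δ j a) (hd' : d' ∈ panelRes cs δ j a)
    (hde : δ d e = w₀ * cs.simple i) (hd'e : δ d' e = w₀ * cs.simple i) : d = d' := by
  by_contra hne
  have hed : δ e d * cs.simple j = w₀⁻¹ := by
    rw [hbld.symm d e, hde, mul_inv_rev, cs.inv_simple, eq_mul_inv_of_mul_eq hj]
    simp only [mul_assoc, inv_mul_cancel_left, cs.simple_mul_simple_cancel_left]
  have hlen : cs.length (δ e d * cs.simple j) = cs.length (δ e d) + 1 := by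
    rw [hed, cs.length_inv, hbld.symm d e, hde, cs.length_inv]
    have := cs.isRightDescent_iff.mp hi
    omega
  have hed' := hbld.wd2' e d d' j (hbld.delta_eq_simple_of_mem_panelRes hd hd' hne) hlen
  rw [hed, hbld.symm d' e, hd'e, inv_inj, mul_eq_left] at hed'
  simpa [hed'] using cs.length_simple i

theorem exists_injOn_panelRes (hbld : IsBuilding M cs δ) {i j : I} {a c : C} {w₀ : W}
    (hac : δ a c = w₀) (hi : cs.IsRightDescent w₀ i) (hj : cs.simple j * w₀ = w₀ * cs.simple i) :
    ∃ f : C → C, Set.MapsTo f (panelRes cs δ j a) (panelRes cs δ i c) ∧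
      Set.InjOn f (panelRes cs δ j a) := by
  choose! f hf hfδ using fun d (hd : d ∈ panelRes cs δ j a) =>
    hbld.exists_mem_panelRes_delta_eq hac hj hd
  exact ⟨f, hf, fun d hd d' hd' hff =>
    hbld.eq_of_delta_eq_mul_simple hi hj hd hd' (hfδ d hd) (hff ▸ hfδ d' hd')⟩

end IsBuilding

/-- Let `B` be a spherical building and `A ⊆ B` an apartment. If every
panel of `A` is contained in at least three distinct chambers of `B`, then `B` is thick. -/
theorem thick_of_thick_apartment
    {I W C : Type*} [Group W] {M : CoxeterMatrix I} (cs : CoxeterSystem M W)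
    (δ : C → C → W) (hbld : IsBuilding M cs δ)
    (hspherical : Finite W)
    (A : Set C) (hA : IsBuildingApartment δ A)
    (h : ∀ c ∈ A, ∀ i : I, ∃ d₁ d₂ d₃ : C, d₁ ≠ d₂ ∧ d₁ ≠ d₃ ∧ d₂ ≠ d₃ ∧
      d₁ ∈ panelRes cs δ i c ∧ d₂ ∈ panelRes cs δ i c ∧ d₃ ∈ panelRes cs δ i c) :
    IsThickBuilding cs δ := by
  intro i c
  obtain ⟨w₀, hmax⟩ := Finite.exists_max cs.length
  obtain ⟨a, haA, hac⟩ := hbld.exists_mem_delta_eq_of_isBuildingApartment hA hmax c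
  obtain ⟨j, hj⟩ := cs.exists_simple_mul_eq_mul_simple_of_forall_length_le hmax i
  obtain ⟨f, hmaps, hinj⟩ :=
    hbld.exists_injOn_panelRes hac (cs.isRightDescent_of_forall_length_le hmax i) hj
  obtain ⟨d₁, d₂, d₃, h₁₂, h₁₃, h₂₃, hd₁, hd₂, hd₃⟩ := h a haA j
  exact ⟨f d₁, f d₂, f d₃, hinj.ne hd₁ hd₂ h₁₂, hinj.ne hd₁ hd₃ h₁₃, hinj.ne hd₂ hd₃ h₂₃,
    hmaps hd₁, hmaps hd₂, hmaps hd₃⟩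
end

section
/- Let B and B' be spherical buildings of the same type (W,I) and let φ:B→B' be a type-preserving simplicial map. Then φ is an epimorphism (surjective on simplices) if and only if for every panel a of B the induced map from the set of chambers of B containing a to the set of chambers of B' containing φ(a) is surjective. -/
section AuxLemmas

variable {I W C C' : Type*} [Group W] {M : CoxeterMatrix I} {cs : CoxeterSystem M W}

/-- `δ c c = 1`. -/
private lemma IsBuilding.delta_self {δ : C → C → W} (h : IsBuilding M cs δ) (c : C) :
    δ c c = 1 := (h.eq_one_iff c c).mpr rfl

/-- Walk along a reduced word, controlling the distance from two base chambers. -/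
private lemma building_walk {δ : C → C → W} (h : IsBuilding M cs δ) :
    ∀ (l : List I), cs.IsReduced l → ∀ (x y : C),
      ∃ z, δ y z = cs.wordProd l ∧ δ x z = δ x y * cs.wordProd l := by
  intro l
  induction l with
  | nil =>
    intro _ x y
    exact ⟨y, by simp [h.delta_self], by simp⟩
  | cons i t ih =>
    intro hred x y
    obtain ⟨y₁, h1, h2⟩ := h.wd3 x y i
    have hcons : cs.wordProd (i :: t) = cs.simple i * cs.wordProd t := cs.wordProd_cons i t
    have hlcons : cs.length (cs.wordProd (i :: t)) = t.length + 1 := by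
      have := hred
      unfold CoxeterSystem.IsReduced at this
      simpa using this
    have hlt : cs.length (cs.wordProd t) = t.length := by
      have hle : cs.length (cs.wordProd t) ≤ t.length := cs.length_wordProd_le t
      have := cs.length_simple_mul (cs.wordProd t) i
      rw [← hcons] at this
      rcases this with h' | h' <;> omega
    have htred : cs.IsReduced t := hlt
    obtain ⟨z, hz1, hz2⟩ := ih htred x y₁
    refine ⟨z, ?_, ?_⟩
    · -- δ y z = π (i :: t)
      have hy1y : δ y₁ y = cs.simple i := by
        rw [h.symm, h1, cs.inv_simple]
      have hzy1 : δ z y₁ = (cs.wordProd t)⁻¹ := by rw [h.symm, hz1]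
      have hlen : cs.length (δ z y₁ * cs.simple i) = cs.length (δ z y₁) + 1 := by
        rw [hzy1, cs.length_inv]
        have : (cs.wordProd t)⁻¹ * cs.simple i = (cs.wordProd (i :: t))⁻¹ := by
          rw [hcons, mul_inv_rev, cs.inv_simple]
        rw [this, cs.length_inv, hlcons, hlt]
      have := h.wd2' z y₁ y i hy1y hlen
      rw [hzy1] at this
      have hinv : δ y z = (δ z y)⁻¹ := by rw [h.symm]
      rw [hinv, this, mul_inv_rev, inv_inv, cs.inv_simple, hcons]
    · rw [hz2, h2, hcons, mul_assoc]

/-- A type-preserving simplicial map does not increase the Weyl distance. -/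
private lemma building_contraction {δ : C → C → W} {δ' : C' → C' → W}
    (hbld : IsBuilding M cs δ) (hbld' : IsBuilding M cs δ') (φ : C → C')
    (hφ : ∀ (c d : C) (i : I), δ c d = cs.simple i →
      (φ c = φ d ∨ δ' (φ c) (φ d) = cs.simple i)) :
    ∀ (x y : C), cs.length (δ' (φ x) (φ y)) ≤ cs.length (δ x y) := by
  suffices h : ∀ n (x y : C), cs.length (δ x y) ≤ n → cs.length (δ' (φ x) (φ y)) ≤ n by
    intro x y
    exact h _ x y le_rfl
  intro n
  induction n with
  | zero =>
    intro x y hxy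
    have : δ x y = 1 := cs.length_eq_zero_iff.mp (Nat.le_zero.mp hxy)
    have hxy' : x = y := (hbld.eq_one_iff x y).mp this
    subst hxy'
    simp [hbld'.delta_self, cs.length_one]
  | succ n ih =>
    intro x y hxy
    rcases Nat.lt_or_ge (cs.length (δ x y)) (n + 1) with hlt | hge
    · exact Nat.le_succ_of_le (ih x y (Nat.lt_succ_iff.mp hlt))
    have hne : δ x y ≠ 1 := by
      intro h1
      rw [h1, cs.length_one] at hge
      omega
    obtain ⟨j, hj⟩ := cs.exists_rightDescent_of_ne_one hne
    have hj' : cs.length (δ x y * cs.simple j) + 1 = cs.length (δ x y) :=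
      cs.isRightDescent_iff.mp hj
    obtain ⟨z, hz1, hz2⟩ := hbld.wd3 x y j
    have hzlen : cs.length (δ x z) ≤ n := by rw [hz2]; omega
    have hIH := ih x z hzlen
    have hyz : δ y z = cs.simple j := hz1
    rcases hφ y z j hyz with heq | hadj
    · rw [heq]
      have := ih x z hzlen
      omega
    · -- δ' (φ z) (φ y) = simple j
      have hzy : δ' (φ z) (φ y) = cs.simple j := by
        rw [hbld'.symm, hadj, cs.inv_simple]
      rcases hbld'.wd2 (φ x) (φ z) (φ y) j hzy with h' | h'
      · rw [h']
        have := cs.length_mul_le (δ' (φ x) (φ z)) (cs.simple j)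
        rw [cs.length_simple] at this
        omega
      · rw [h']; omega

/-- Panel surjectivity implies chamber surjectivity. -/
private lemma chamber_surjective_of_panel {δ : C → C → W} {δ' : C' → C' → W}
    (hbld' : IsBuilding M cs δ') (φ : C → C')
    (hpanel : ∀ (c : C) (i : I), ∀ d' ∈ panelRes cs δ' i (φ c),
      ∃ d ∈ panelRes cs δ i c, φ d = d') :
    ∀ n (c₀ : C) (d' : C'), cs.length (δ' (φ c₀) d') ≤ n → ∃ c : C, φ c = d' := by
  intro n
  induction n with
  | zero =>
    intro c₀ d' h
    have : δ' (φ c₀) d' = 1 := cs.length_eq_zero_iff.mp (Nat.le_zero.mp h)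
    exact ⟨c₀, (hbld'.eq_one_iff _ _).mp this⟩
  | succ n ih =>
    intro c₀ d' h
    rcases Nat.lt_or_ge (cs.length (δ' (φ c₀) d')) (n + 1) with hlt | hge
    · exact ih c₀ d' (Nat.lt_succ_iff.mp hlt)
    have hne : δ' (φ c₀) d' ≠ 1 := by
      intro h1
      rw [h1, cs.length_one] at hge
      omega
    obtain ⟨i, hi⟩ := cs.exists_leftDescent_of_ne_one hne
    have hi' : cs.length (cs.simple i * δ' (φ c₀) d') + 1 = cs.length (δ' (φ c₀) d') :=
      cs.isLeftDescent_iff.mp hi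
    obtain ⟨e', he1, he2⟩ := hbld'.wd3 d' (φ c₀) i
    -- he1 : δ' (φ c₀) e' = simple i, he2 : δ' d' e' = δ' d' (φ c₀) * simple i
    have hmem : e' ∈ panelRes cs δ' i (φ c₀) := Or.inr he1
    obtain ⟨e, _, hee⟩ := hpanel c₀ i e' hmem
    have he'd : δ' (φ e) d' = cs.simple i * δ' (φ c₀) d' := by
      rw [hee, hbld'.symm, he2, hbld'.symm d' (φ c₀), mul_inv_rev, cs.inv_simple]
    have : cs.length (δ' (φ e) d') ≤ n := by rw [he'd]; omega
    exact ih e d' this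

end AuxLemmas

/-- Let `B, B'` be spherical buildings of the same type `(W, I)` and let
`φ` be a type-preserving simplicial map from `B` to `B'` (encoded on chambers). Then `φ`
is an epimorphism (surjective on simplices, i.e. on all residues) if and only if its
restriction to every panel is surjective. -/
theorem epimorphism_iff_panel_surjective
    {I W C C' : Type*} [Group W] [Nonempty C] [Nonempty C'] {M : CoxeterMatrix I}
    (cs : CoxeterSystem M W)
    (δ : C → C → W) (δ' : C' → C' → W)
    (hbld : IsBuilding M cs δ) (hbld' : IsBuilding M cs δ')
    (hspherical : Finite W)
    (φ : C → C')
    -- `φ` is (the chamber map of) a type-preserving simplicial map over `I`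
    (hφ : ∀ (c d : C) (i : I), δ c d = cs.simple i →
      (φ c = φ d ∨ δ' (φ c) (φ d) = cs.simple i)) :
    -- `φ` is surjective on simplices (equivalently, on residues of each cotype `J`) ...
    (∀ (J : Set I) (d' : C'), ∃ c : C, δ' (φ c) d' ∈ Subgroup.closure (cs.simple '' J))
    ↔
    -- ... iff for every panel the induced map between the corresponding panel residues
    -- is surjective.
    (∀ (c : C) (i : I), ∀ d' ∈ panelRes cs δ' i (φ c),
      ∃ d ∈ panelRes cs δ i c, φ d = d') := by
  constructor
  · -- epimorphism ⇒ panel surjectivity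
    intro hsurj c i d' hd'
    rcases hd' with h1 | hs
    · exact ⟨c, Or.inl (hbld.delta_self c), (hbld'.eq_one_iff _ _).mp h1⟩
    -- δ' (φ c) d' = simple i
    obtain ⟨w₀, hw₀⟩ := Finite.exists_max (fun w : W => cs.length w)
    set v : W := cs.simple i * w₀ with hv_def
    have hsiv : cs.simple i * v = w₀ := by
      rw [hv_def, ← mul_assoc, cs.simple_mul_simple_self, one_mul]
    have hv : cs.length v + 1 = cs.length w₀ := by
      rcases cs.length_simple_mul w₀ i with h' | h'
      · have := hw₀ (cs.simple i * w₀); omega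
      · exact h'
    obtain ⟨l, hlred, hlv⟩ := cs.exists_reduced_word' v
    obtain ⟨y', hy1, hy2⟩ := building_walk hbld' l hlred (φ c) d'
    rw [← hlv] at hy1 hy2
    rw [hs, hsiv] at hy2
    -- hy1 : δ' d' y' = v, hy2 : δ' (φ c) y' = w₀
    obtain ⟨e, he⟩ := hsurj ∅ y'
    have hey : φ e = y' := by
      rw [Set.image_empty, Subgroup.closure_empty, Subgroup.mem_bot] at he
      exact (hbld'.eq_one_iff _ _).mp he
    have hcontr := building_contraction hbld hbld' φ hφ
    have hlce : cs.length (δ c e) = cs.length w₀ := by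
      have h1 : cs.length (δ' (φ c) (φ e)) ≤ cs.length (δ c e) := hcontr c e
      rw [hey, hy2] at h1
      have h2 := hw₀ (δ c e)
      omega
    obtain ⟨d, hd1, hd2⟩ := hbld.wd3 e c i
    -- hd1 : δ c d = simple i, hd2 : δ e d = δ e c * simple i
    have hde : δ d e = cs.simple i * δ c e := by
      rw [hbld.symm, hd2, hbld.symm e c, mul_inv_rev, cs.inv_simple]
    have hlde : cs.length (δ d e) + 1 = cs.length w₀ := by
      rw [hde]
      rcases cs.length_simple_mul (δ c e) i with h' | h'
      · have := hw₀ (cs.simple i * δ c e); omega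
      · omega
    have hkey : cs.length (δ' (φ d) y') + 1 ≤ cs.length w₀ := by
      have := hcontr d e
      rw [hey] at this
      omega
    rcases hφ c d i hd1 with heq | hadj
    · exfalso
      rw [← heq, hy2] at hkey
      omega
    · refine ⟨d, Or.inr hd1, ?_⟩
      rcases hbld'.wd2 d' (φ c) (φ d) i hadj with h' | h'
      · -- δ' d' (φ d) = δ' d' (φ c) * simple i = 1
        have hdc : δ' d' (φ c) = cs.simple i := by
          rw [hbld'.symm, hs, cs.inv_simple]
        rw [hdc, cs.simple_mul_simple_self] at h'
        exact ((hbld'.eq_one_iff _ _).mp h').symm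
      · -- δ' d' (φ d) = simple i : derive a contradiction
        exfalso
        have hdc : δ' d' (φ c) = cs.simple i := by
          rw [hbld'.symm, hs, cs.inv_simple]
        rw [hdc] at h'
        have hyd : δ' y' d' = v⁻¹ := by rw [hbld'.symm, hy1]
        have hlencond : cs.length (δ' y' d' * cs.simple i) = cs.length (δ' y' d') + 1 := by
          rw [hyd]
          have : v⁻¹ * cs.simple i = w₀⁻¹ := by
            rw [← cs.inv_simple, ← mul_inv_rev, hsiv]
          rw [this, cs.length_inv, cs.length_inv]
          omega
        have := hbld'.wd2' y' d' (φ d) i h' hlencond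
        have hlyd : cs.length (δ' y' (φ d)) = cs.length w₀ := by
          rw [this, hyd]
          have : v⁻¹ * cs.simple i = w₀⁻¹ := by
            rw [← cs.inv_simple, ← mul_inv_rev, hsiv]
          rw [this, cs.length_inv]
        have : cs.length (δ' (φ d) y') = cs.length w₀ := by
          rw [hbld'.symm, cs.length_inv] at hlyd
          exact hlyd
        omega
  · -- panel surjectivity ⇒ epimorphism
    intro hpanel J d'
    obtain ⟨c₀⟩ := ‹Nonempty C›
    obtain ⟨c, hc⟩ := chamber_surjective_of_panel hbld' φ hpanel
      (cs.length (δ' (φ c₀) d')) c₀ d' le_rfl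
    refine ⟨c, ?_⟩
    rw [hc, hbld'.delta_self]
    exact one_mem _
end
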